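/- arXiv:0906.5101 — 2 statements merged into one kernel-verified Lean document; each statement's English description precedes it below -/
import Mathlib

section
/- Let X₁, X₂,… be i.i.d. and h a kernel of order m ≥ 2 with E|h(X₁,…,X_m)|^{5/3} < ∞. Then, as n → ∞, [n]^{-2m+1} Σ_{1 ≤ i₁ ≠ … ≠ i_m ≤ n} h²(X_{i₁},…,X_{i_m}) → 0 almost surely, where [n]^{-2m+1} = (n−2m+1)!/n!. -/
/-!
Write `Ψ = |h|^{5/3}`, so that `h² = Ψ^{6/5}`, and let `S n` be the sum of `Ψ` over the injective
index tuples below `n`. Since `x ↦ x^{6/5}` is superadditive, the sum of the `h²` is at most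
`(S n)^{6/5}`, so it suffices that `S n / n^{5(2m-1)/6} → 0` almost surely. Each summand of `S n`
has the law of `Ψ(X₀, …, X_{m-1})`, hence `E (S n) ≤ n^m E Ψ`, and `m < 5(2m-1)/6` exactly when
`m ≥ 2`. Along `n = 2^j` the expectations of `S n / n^{5(2m-1)/6}` are then geometrically summable,
which forces almost sure convergence to `0`; monotonicity of `S` fills in the gaps between powers
of two. Finally `(n-2m+1)!/n! ≤ 2^{2m-1}/n^{2m-1}` for large `n`.
-/

open MeasureTheory ProbabilityTheory Filter Nat
open scoped Topology ENNReal

lemma sum_rpow_le_rpow_sum {ι : Type*} (s : Finset ι) {f : ι → ℝ} (hf : ∀ i ∈ s, 0 ≤ f i)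
    {p : ℝ} (hp : 1 ≤ p) : ∑ i ∈ s, f i ^ p ≤ (∑ i ∈ s, f i) ^ p := by
  classical
  induction s using Finset.induction_on with
  | empty => simp [Real.zero_rpow (by linarith : p ≠ 0)]
  | insert a s ha ih =>
    rw [Finset.forall_mem_insert] at hf
    rw [Finset.sum_insert ha, Finset.sum_insert ha]
    calc f a ^ p + ∑ i ∈ s, f i ^ p ≤ f a ^ p + (∑ i ∈ s, f i) ^ p := by gcongr; exact ih hf.2
      _ ≤ _ := Real.add_rpow_le_rpow_add hf.1 (Finset.sum_nonneg hf.2) hp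

lemma tendsto_sum_rpow_div_rpow_mul {ι : Type*} {s : ℕ → Finset ι} {f : ι → ℝ}
    (hf : ∀ i, 0 ≤ f i) {b p : ℝ} (hp : 1 ≤ p)
    (h : Tendsto (fun n => (∑ i ∈ s n, f i) / (n : ℝ) ^ b) atTop (𝓝 0)) :
    Tendsto (fun n => (∑ i ∈ s n, f i ^ p) / (n : ℝ) ^ (b * p)) atTop (𝓝 0) := by
  have hlim : Tendsto (fun n => ((∑ i ∈ s n, f i) / (n : ℝ) ^ b) ^ p) atTop (𝓝 0) := by
    have := h.rpow_const (Or.inr (zero_le_one.trans hp))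
    rwa [Real.zero_rpow (by linarith)] at this
  refine squeeze_zero (fun n => div_nonneg (Finset.sum_nonneg fun i _ => Real.rpow_nonneg (hf i) p)
    (by positivity)) (fun n => ?_) hlim
  rw [Real.div_rpow (Finset.sum_nonneg fun i _ => hf i) (by positivity),
    ← Real.rpow_mul (Nat.cast_nonneg n)]
  gcongr
  exact sum_rpow_le_rpow_sum _ (fun i _ => hf i) hp

lemma tendsto_div_rpow_of_monotone_of_tendsto_two_pow {u : ℕ → ℝ} (hu : Monotone u)
    (hu0 : ∀ n, 0 ≤ u n) {b : ℝ} (hb : 0 ≤ b)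
    (h : Tendsto (fun j => u (2 ^ j) / ((2 : ℝ) ^ j) ^ b) atTop (𝓝 0)) :
    Tendsto (fun n => u n / (n : ℝ) ^ b) atTop (𝓝 0) := by
  have hlog : Tendsto (fun n => Nat.log 2 n + 1) atTop atTop :=
    tendsto_atTop_atTop_of_monotone (fun _ _ hab => by gcongr)
      fun j => ⟨2 ^ j, by rw [Nat.log_pow one_lt_two]; omega⟩
  refine squeeze_zero' (Eventually.of_forall fun n => div_nonneg (hu0 n) (by positivity))
    ?_ (by simpa using (h.comp hlog).const_mul ((2 : ℝ) ^ b))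
  filter_upwards [eventually_ne_atTop 0] with n hn
  set k := Nat.log 2 n
  have hlow : ((2 : ℝ) ^ k) ≤ n := by exact_mod_cast Nat.pow_log_le_self 2 hn
  have hup : n ≤ 2 ^ (k + 1) := (Nat.lt_pow_succ_log_self one_lt_two n).le
  have hpow : ((2 : ℝ) ^ (k + 1)) ^ b = 2 ^ b * ((2 : ℝ) ^ k) ^ b := by
    rw [pow_succ, Real.mul_rpow (by positivity) (by norm_num), mul_comm]
  calc u n / (n : ℝ) ^ b ≤ u (2 ^ (k + 1)) / ((2 : ℝ) ^ k) ^ b := by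
        gcongr
        · exact hu0 _
        · exact hu hup
    _ = 2 ^ b * (u (2 ^ (k + 1)) / ((2 : ℝ) ^ (k + 1)) ^ b) := by
        rw [hpow]; field_simp

lemma pow_le_two_pow_mul_descFactorial {n r : ℕ} (h : 2 * r ≤ n + 2) :
    n ^ r ≤ 2 ^ r * n.descFactorial r :=
  calc n ^ r ≤ (2 * (n + 1 - r)) ^ r := Nat.pow_le_pow_left (by omega) r
    _ = 2 ^ r * (n + 1 - r) ^ r := mul_pow ..
    _ ≤ 2 ^ r * n.descFactorial r := Nat.mul_le_mul_left _ (Nat.pow_sub_le_descFactorial n r)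

lemma factorial_sub_div_factorial_le {n r : ℕ} (h : 2 * r ≤ n) :
    ((n - r)! : ℝ) / n ! ≤ 2 ^ r / (n : ℝ) ^ r := by
  rcases Nat.eq_zero_or_pos n with rfl | hn
  · obtain rfl : r = 0 := by omega
    simp
  rw [div_le_div_iff₀ (by positivity) (by positivity), ← Nat.factorial_mul_descFactorial
    (by omega : r ≤ n), Nat.cast_mul, mul_left_comm]
  gcongr
  exact_mod_cast pow_le_two_pow_mul_descFactorial (by omega)

/-- The index set `{(i₁, …, i_m) pairwise distinct : i_j < n}` of a U-statistic of order `m`,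
indexed from `0` rather than `1`. -/
def injTuples (m n : ℕ) : Finset (Fin m → ℕ) :=
  (Fintype.piFinset fun _ => Finset.range n).filter Function.Injective

lemma injTuples_mono (m : ℕ) : Monotone (injTuples m) := fun _ _ hn =>
  Finset.filter_subset_filter _ <| Fintype.piFinset_subset _ _ fun _ =>
    Finset.range_subset_range.2 hn

lemma card_injTuples_le (m n : ℕ) : (injTuples m n).card ≤ n ^ m :=
  (Finset.card_filter_le _ _).trans (by simp)

lemma sum_fin_ite_injective_eq_sum_injTuples {M : Type*} [AddCommMonoid M] (m n : ℕ)
    (g : (Fin m → ℕ) → M) :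
    ∑ i : Fin m → Fin n, (if i.Injective then g (fun j => i j) else 0) =
      ∑ i ∈ injTuples m n, g i := by
  rw [← Finset.sum_filter]
  refine Finset.sum_bij (fun i _ j => i j) (fun i hi => ?_) (fun i _ i' _ hii' => ?_)
    (fun i hi => ?_) (fun _ _ => rfl)
  · simp only [injTuples, Finset.mem_filter, Fintype.mem_piFinset, Finset.mem_range] at hi ⊢
    exact ⟨fun j => (i j).isLt, fun j j' hjj' => hi.2 (Fin.val_injective hjj')⟩
  · exact funext fun j => Fin.val_injective (congrFun hii' j)
  · simp only [injTuples, Finset.mem_filter, Fintype.mem_piFinset, Finset.mem_range] at hi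
    refine ⟨fun j => ⟨i j, hi.1 j⟩, ?_, rfl⟩
    exact Finset.mem_filter.2 ⟨Finset.mem_univ _, fun j j' hjj' => hi.2 (Fin.mk.inj_iff.1 hjj')⟩

lemma tendsto_factorial_div_mul_sum_injective {m r : ℕ} {g : (Fin m → ℕ) → ℝ}
    (hg : ∀ i, 0 ≤ g i)
    (h : Tendsto (fun n => (∑ i ∈ injTuples m n, g i) / (n : ℝ) ^ r) atTop (𝓝 0)) :
    Tendsto (fun n => ((n - r)! : ℝ) / n ! *
      ∑ i : Fin m → Fin n, if i.Injective then g (fun j => i j) else 0) atTop (𝓝 0) := by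
  refine squeeze_zero' (Eventually.of_forall fun n => ?_)
    ((eventually_ge_atTop (2 * r)).mono fun n hn => ?_) (by simpa using h.const_mul (2 ^ r))
  all_goals rw [sum_fin_ite_injective_eq_sum_injTuples]
  · exact mul_nonneg (by positivity) (Finset.sum_nonneg fun i _ => hg i)
  · calc _ ≤ 2 ^ r / (n : ℝ) ^ r * ∑ i ∈ injTuples m n, g i :=
          mul_le_mul_of_nonneg_right (factorial_sub_div_factorial_le hn)
            (Finset.sum_nonneg fun i _ => hg i)
      _ = _ := by ring

section

variable {Ω : Type*} [MeasurableSpace Ω] {μ : Measure Ω}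

lemma ae_tendsto_zero_of_summable_integral {f : ℕ → Ω → ℝ} (hf : ∀ j, Integrable (f j) μ)
    (hf0 : ∀ j ω, 0 ≤ f j ω) (hsum : Summable fun j => ∫ ω, f j ω ∂μ) :
    ∀ᵐ ω ∂μ, Tendsto (fun j => f j ω) atTop (𝓝 0) := by
  have hnorm : ∑' j, eLpNorm (f j) 1 μ ≠ ∞ := by
    have hj : ∀ j, eLpNorm (f j) 1 μ = ENNReal.ofReal (∫ ω, f j ω ∂μ) := fun j => by
      rw [eLpNorm_one_eq_lintegral_enorm, ofReal_integral_eq_lintegral_ofReal (hf j)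
        (Eventually.of_forall (hf0 j))]
      simp_rw [Real.enorm_of_nonneg (hf0 j _)]
    simp_rw [hj, ← ENNReal.ofReal_tsum_of_nonneg (fun j => integral_nonneg (hf0 j)) hsum]
    exact ENNReal.ofReal_ne_top
  filter_upwards [summable_norm_of_tsum_eLpNorm_ne_top le_rfl
    (fun j => (hf j).aestronglyMeasurable) hnorm] with ω hω
  exact tendsto_zero_iff_norm_tendsto_zero.2 hω.tendsto_atTop_zero

lemma ae_tendsto_div_rpow_of_integral_le {S : ℕ → Ω → ℝ} (hS : ∀ n, Integrable (S n) μ)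
    (hS0 : ∀ n ω, 0 ≤ S n ω) (hmono : ∀ ω, Monotone fun n => S n ω) {C a b : ℝ} (hab : a < b)
    (hb : 0 ≤ b) (hbound : ∀ n, ∫ ω, S n ω ∂μ ≤ C * (n : ℝ) ^ a) :
    ∀ᵐ ω ∂μ, Tendsto (fun n => S n ω / (n : ℝ) ^ b) atTop (𝓝 0) := by
  have hq : (2 : ℝ) ^ (a - b) < 1 := Real.rpow_lt_one_of_one_lt_of_neg one_lt_two (by linarith)
  have hdyadic : ∀ᵐ ω ∂μ, Tendsto (fun j => S (2 ^ j) ω / ((2 : ℝ) ^ j) ^ b) atTop (𝓝 0) := by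
    refine ae_tendsto_zero_of_summable_integral (fun j => (hS _).div_const _)
      (fun j ω => div_nonneg (hS0 _ ω) (by positivity)) ?_
    refine Summable.of_nonneg_of_le (fun j => integral_nonneg fun ω => div_nonneg (hS0 _ ω)
      (by positivity)) (fun j => ?_)
      ((summable_geometric_of_lt_one (by positivity) hq).mul_left C)
    have h2j : (((2 ^ j : ℕ) : ℝ)) = 2 ^ j := by push_cast; ring
    calc ∫ ω, S (2 ^ j) ω / ((2 : ℝ) ^ j) ^ b ∂μ
        = (∫ ω, S (2 ^ j) ω ∂μ) / ((2 : ℝ) ^ j) ^ b := integral_div _ _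
      _ ≤ C * ((2 : ℝ) ^ j) ^ a / ((2 : ℝ) ^ j) ^ b := by
        gcongr
        simpa [h2j] using hbound (2 ^ j)
      _ = C * ((2 : ℝ) ^ (a - b)) ^ j := by
        rw [mul_div_assoc, ← Real.rpow_sub (by positivity), Real.rpow_pow_comm (by norm_num)]
  filter_upwards [hdyadic] with ω hω
  exact tendsto_div_rpow_of_monotone_of_tendsto_two_pow (hmono ω) (fun n => hS0 n ω) hb hω

lemma identDistrib_comp_of_injective [IsProbabilityMeasure μ] {ι κ β : Type*} [Fintype ι]
    [MeasurableSpace β] {X : κ → Ω → β} (hX : ∀ k, Measurable (X k)) (hindep : iIndepFun X μ)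
    {ν : Measure β} (hident : ∀ k, μ.map (X k) = ν) {e e' : ι → κ} (he : e.Injective)
    (he' : e'.Injective) :
    IdentDistrib (fun ω j => X (e j) ω) (fun ω j => X (e' j) ω) μ μ where
  aemeasurable_fst := (measurable_pi_lambda _ fun j => hX (e j)).aemeasurable
  aemeasurable_snd := (measurable_pi_lambda _ fun j => hX (e' j)).aemeasurable
  map_eq := by
    rw [(iIndepFun_iff_map_fun_eq_pi_map fun j => (hX (e j)).aemeasurable).1 (hindep.precomp he),
      (iIndepFun_iff_map_fun_eq_pi_map fun j => (hX (e' j)).aemeasurable).1 (hindep.precomp he')]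
    simp only [hident]

lemma integral_sum_eq_card_mul_of_identDistrib {ι α : Type*} [MeasurableSpace α] {s : Finset ι}
    {Y : ι → Ω → α} {Y₀ : Ω → α} (hY : ∀ i ∈ s, IdentDistrib (Y i) Y₀ μ μ) {G : α → ℝ}
    (hG : Measurable G) (hint : Integrable (fun ω => G (Y₀ ω)) μ) :
    ∫ ω, ∑ i ∈ s, G (Y i ω) ∂μ = s.card * ∫ ω, G (Y₀ ω) ∂μ := by
  calc ∫ ω, ∑ i ∈ s, G (Y i ω) ∂μ = ∑ i ∈ s, ∫ ω, G (Y i ω) ∂μ :=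
        integral_finsetSum _ fun i hi => ((hY i hi).comp hG).integrable_iff.2 hint
    _ = ∑ i ∈ s, ∫ ω, G (Y₀ ω) ∂μ :=
        Finset.sum_congr rfl fun i hi => ((hY i hi).comp hG).integral_eq
    _ = _ := by rw [Finset.sum_const, nsmul_eq_mul]

lemma ae_tendsto_sum_injTuples_div_rpow [IsProbabilityMeasure μ] {β : Type*} [MeasurableSpace β]
    {X : ℕ → Ω → β} (hX : ∀ k, Measurable (X k)) (hindep : iIndepFun X μ) {ν : Measure β}
    (hident : ∀ k, μ.map (X k) = ν) {m : ℕ} {G : (Fin m → β) → ℝ} (hG : Measurable G)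
    (hG0 : ∀ x, 0 ≤ G x) (hint : Integrable (fun ω => G fun j => X j ω) μ) {b : ℝ}
    (hmb : (m : ℝ) < b) :
    ∀ᵐ ω ∂μ, Tendsto (fun n => (∑ i ∈ injTuples m n, G fun j => X (i j) ω) / (n : ℝ) ^ b)
      atTop (𝓝 0) := by
  have hid (n : ℕ) : ∀ i ∈ injTuples m n,
      IdentDistrib (fun ω j => X (i j) ω) (fun ω (j : Fin m) => X j ω) μ μ := fun _ hi =>
    identDistrib_comp_of_injective hX hindep hident (Finset.mem_filter.1 hi).2 Fin.val_injective
  refine ae_tendsto_div_rpow_of_integral_le (C := ∫ ω, G (fun j => X j ω) ∂μ)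
    (S := fun n ω => ∑ i ∈ injTuples m n, G fun j => X (i j) ω)
    (fun n => integrable_finsetSum _ fun i hi => ((hid n i hi).comp hG).integrable_iff.2 hint)
    (fun n ω => Finset.sum_nonneg fun i _ => hG0 _)
    (fun ω n n' hnn' => Finset.sum_le_sum_of_subset_of_nonneg (injTuples_mono m hnn')
      fun i _ _ => hG0 _) hmb ((Nat.cast_nonneg m).trans hmb.le) (fun n => ?_)
  rw [integral_sum_eq_card_mul_of_identDistrib (hid n) hG hint, mul_comm, Real.rpow_natCast]
  gcongr
  · exact integral_nonneg fun ω => hG0 _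
  · exact_mod_cast card_injTuples_le m n

end

/-- Marcinkiewicz–Zygmund type SLLN (Proposition 3): if `E|h|^{5/3} < ∞` and `m ≥ 2`, then
`[n]^{-2m+1} Σ_{1 ≤ i₁≠…≠i_m ≤ n} h²(X_{i₁},…,X_{i_m}) → 0` almost surely, where
`[n]^{-2m+1} = (n−2m+1)!/n!`. -/
theorem stmt7 {Ω : Type*} [MeasurableSpace Ω] (μ : Measure Ω) [IsProbabilityMeasure μ]
    (m : ℕ) (hm : 2 ≤ m)
    (X : ℕ → Ω → ℝ) (hXmeas : ∀ i, Measurable (X i))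
    (hindep : iIndepFun X μ)
    (hident : ∀ i, μ.map (X i) = μ.map (X 0))
    (h : (Fin m → ℝ) → ℝ) (hmeas : Measurable h)
    (hint : Integrable (fun ω => |h (fun j => X j ω)| ^ ((5 : ℝ) / 3)) μ) :
    ∀ᵐ ω ∂μ, Tendsto
      (fun n => (((n - (2 * m - 1))! : ℝ) / (n ! : ℝ)) *
        ∑ i : Fin m → Fin n, if Function.Injective i then (h (fun j => X (i j) ω)) ^ 2 else 0)
      atTop (nhds 0) := by
  set r := 2 * m - 1
  have hmr : (m : ℝ) < 5 * r / 6 := by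
    have hm' : (2 : ℝ) ≤ m := by exact_mod_cast hm
    rw [show (r : ℝ) = 2 * m - 1 by rw [Nat.cast_sub (by omega)]; push_cast; ring]
    linarith
  filter_upwards [ae_tendsto_sum_injTuples_div_rpow (G := fun x => |h x| ^ ((5 : ℝ) / 3))
    hXmeas hindep hident (hmeas.abs.pow_const _) (fun x => by positivity) hint hmr] with ω hω
  have hpow (x : ℝ) : (|x| ^ ((5 : ℝ) / 3)) ^ ((6 : ℝ) / 5) = x ^ 2 := by
    rw [← Real.rpow_mul (abs_nonneg x)]; norm_num
  have hr : (5 * r / 6 : ℝ) * (6 / 5) = r := by ring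
  have hsq := tendsto_sum_rpow_div_rpow_mul (p := 6 / 5) (fun i => by positivity) (by norm_num) hω
  simp only [hpow, hr, Real.rpow_natCast] at hsq
  exact tendsto_factorial_div_mul_sum_injective (g := fun i => h (fun j => X (i j) ω) ^ 2)
    (fun i => sq_nonneg _) hsq
end

section
/- Let X₁, X₂,… be i.i.d., h a kernel of order m ≥ 2 with E|h(X₁,…,X_m)|^{5/3} < ∞, and define the truncated conditional-expectation tail h̃*(x) = E( h(X₁,…,X_m) 1(|h| > n^{3m/5}) | X₁ = x ). Then (1/(n−2m+2)) Σ_{i ∈ I_n} h̃*(X_i)² = o_P(1) as n → ∞, where I_n = {1,…,n} \ {2,…,2m−1}. -/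
open MeasureTheory ProbabilityTheory Filter Finset

/-!
On `{|h| > t}` we have `|h| ≤ t^{-2/3} |h|^{5/3}`, so the truncated tail has
`E|h 1(|h| > t)| ≤ t^{-2/3} E|h|^{5/3}`, and conditional expectation and identical distribution
carry this bound over to every `E|h̃*(Xᵢ)|`. Since `Σ aᵢ² ≤ (Σ |aᵢ|)²`, Markov's inequality
applied to `Σ |h̃*(Xᵢ)|` gives `P(Σ h̃*(Xᵢ)² ≥ εN) ≤ √(N/ε) · t^{-2/3} E|h|^{5/3}`. With
`t = n^{3m/5}` and `N ≤ n` this is `O(n^{1/2 - 2m/5})`, which tends to `0` because `m ≥ 2`.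
-/

lemma abs_ite_lt_abs_le_rpow {t p : ℝ} (ht : 0 < t) (hp : 1 ≤ p) (x : ℝ) :
    |if t < |x| then x else 0| ≤ t ^ (1 - p) * |x| ^ p := by
  split_ifs with hx
  · have hx0 : 0 < |x| := ht.trans hx
    calc |x| = |x| ^ (1 - p) * |x| ^ p := by
          rw [← Real.rpow_add hx0, sub_add_cancel, Real.rpow_one]
      _ ≤ t ^ (1 - p) * |x| ^ p :=
          mul_le_mul_of_nonneg_right (Real.rpow_le_rpow_of_nonpos ht hx.le (by linarith))
            (by positivity)
  · rw [abs_zero]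
    positivity

section Probability

variable {Ω : Type*} {m : MeasurableSpace Ω} [MeasurableSpace Ω] {μ : Measure Ω}

lemma integral_abs_ite_lt_abs_le {H : Ω → ℝ} {t p : ℝ} (ht : 0 < t) (hp : 1 ≤ p)
    (hint : Integrable (fun ω => |H ω| ^ p) μ) :
    ∫ ω, |if t < |H ω| then H ω else 0| ∂μ ≤ t ^ (1 - p) * ∫ ω, |H ω| ^ p ∂μ := by
  rw [← integral_const_mul]
  exact integral_mono_of_nonneg (Eventually.of_forall fun _ => abs_nonneg _)
    (hint.const_mul _) (Eventually.of_forall fun ω => abs_ite_lt_abs_le_rpow ht hp (H ω))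

lemma integral_abs_le_of_ae_eq_condExp {f Y : Ω → ℝ}
    (hY : Y =ᵐ[μ] μ[f | m]) : ∫ ω, |Y ω| ∂μ ≤ ∫ ω, |f ω| ∂μ := by
  rw [integral_congr_ae (hY.mono fun ω hω => congrArg abs hω)]
  exact integral_abs_condExp_le f

lemma measureReal_abs_mean_sq_ge_le [IsFiniteMeasure μ] {ι : Type*} {S : Finset ι}
    (hS : S.Nonempty) {Y : ι → Ω → ℝ} (hY : ∀ i ∈ S, Integrable (Y i) μ) {B : ℝ}
    (hB : ∀ i ∈ S, ∫ ω, |Y i ω| ∂μ ≤ B) {ε : ℝ} (hε : 0 < ε) :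
    μ.real {ω | ε ≤ |(#S : ℝ)⁻¹ * ∑ i ∈ S, Y i ω ^ 2|} ≤ √(#S / ε) * B := by
  set N : ℝ := (#S : ℝ)
  have hN : 0 < N := by simpa [N] using hS.card_pos
  have hs : 0 < √(ε * N) := Real.sqrt_pos.mpr (mul_pos hε hN)
  have hsub : {ω | ε ≤ |N⁻¹ * ∑ i ∈ S, Y i ω ^ 2|} ⊆ {ω | √(ε * N) ≤ ∑ i ∈ S, |Y i ω|} := by
    intro ω hω
    have hsq : ε * N ≤ (∑ i ∈ S, |Y i ω|) ^ 2 :=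
      calc ε * N ≤ ∑ i ∈ S, Y i ω ^ 2 := by
            rw [Set.mem_ofPred_eq, abs_of_nonneg (by positivity), inv_mul_eq_div,
              le_div_iff₀ hN] at hω
            exact hω
        _ = ∑ i ∈ S, |Y i ω| ^ 2 := by simp only [sq_abs]
        _ ≤ (∑ i ∈ S, |Y i ω|) ^ 2 := sum_sq_le_sq_sum_of_nonneg fun i _ => abs_nonneg _
    exact Real.sqrt_le_sqrt hsq |>.trans_eq (Real.sqrt_sq (sum_nonneg fun i _ => abs_nonneg _))
  have hsum_int : Integrable (fun ω => ∑ i ∈ S, |Y i ω|) μ :=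
    integrable_finsetSum S fun i hi => (hY i hi).abs
  have hmarkov := mul_meas_ge_le_integral_of_nonneg
    (Eventually.of_forall fun ω => sum_nonneg fun i _ => abs_nonneg (Y i ω)) hsum_int (√(ε * N))
  have hmean : ∫ ω, ∑ i ∈ S, |Y i ω| ∂μ ≤ N * B := by
    rw [integral_finsetSum S fun i hi => (hY i hi).abs]
    simpa [N] using sum_le_sum hB
  calc μ.real {ω | ε ≤ |N⁻¹ * ∑ i ∈ S, Y i ω ^ 2|}
      ≤ μ.real {ω | √(ε * N) ≤ ∑ i ∈ S, |Y i ω|} := measureReal_mono hsub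
    _ ≤ N * B / √(ε * N) := by rw [le_div_iff₀' hs]; linarith
    _ = √(N / ε) * B := by
      rw [Real.sqrt_div' _ hε.le, Real.sqrt_mul hε.le]
      field_simp
      rw [Real.sq_sqrt hN.le, mul_comm]

lemma measureReal_abs_mean_sq_comp_ge_le [IsFiniteMeasure μ] {ι β : Type*} [MeasurableSpace β]
    {X : ι → Ω → β} {i₀ : ι} (hX : ∀ i, IdentDistrib (X i) (X i₀) μ μ) {φ : β → ℝ}
    (hφ : Measurable φ) {f : Ω → ℝ}
    (hφf : (fun ω => φ (X i₀ ω)) =ᵐ[μ] μ[f | m]) {S : Finset ι} (hS : S.Nonempty) {ε : ℝ}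
    (hε : 0 < ε) :
    μ.real {ω | ε ≤ |(#S : ℝ)⁻¹ * ∑ i ∈ S, φ (X i ω) ^ 2|} ≤ √(#S / ε) * ∫ ω, |f ω| ∂μ := by
  have hint : Integrable (fun ω => φ (X i₀ ω)) μ := integrable_condExp.congr hφf.symm
  refine measureReal_abs_mean_sq_ge_le hS (fun i _ => ((hX i).comp hφ).integrable_iff.mpr hint)
    (fun i _ => ?_) hε
  exact ((hX i).comp hφ.abs).integral_eq.trans_le (integral_abs_le_of_ae_eq_condExp hφf)

end Probability

lemma natCast_card_range_sdiff_Ico {n k : ℕ} (hk : 1 ≤ k) (hkn : k ≤ n) :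
    (#(range n \ Ico 1 k) : ℝ) = n - k + 1 := by
  rw [card_sdiff_of_subset fun x hx => by simp only [mem_Ico, mem_range] at hx ⊢; omega,
    Nat.card_Ico, card_range, Nat.cast_sub (by omega), Nat.cast_sub hk]
  ring

lemma tendsto_sqrt_mul_rpow_neg_atTop {a : ℝ} (ha : 1 / 2 < a) :
    Tendsto (fun x : ℝ => √x * x ^ (-a)) atTop (nhds 0) := by
  refine (tendsto_rpow_neg_atTop (by linarith : 0 < a - 1 / 2)).congr' ?_
  filter_upwards [eventually_gt_atTop 0] with x hx
  rw [Real.sqrt_eq_rpow, ← Real.rpow_add hx]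
  ring_nf

lemma tendsto_sqrt_div_mul_rpow_rpow_atTop {ε a p : ℝ} (hε : 0 ≤ ε) (hap : 1 / 2 < a * (p - 1))
    (C : ℝ) : Tendsto (fun x : ℝ => √(x / ε) * ((x ^ a) ^ (1 - p) * C)) atTop (nhds 0) := by
  have := (tendsto_sqrt_mul_rpow_neg_atTop hap).mul_const (C / √ε)
  rw [zero_mul] at this
  refine this.congr' ?_
  filter_upwards [eventually_ge_atTop 0] with x hx
  rw [← Real.rpow_mul hx, Real.sqrt_div' _ hε]
  ring_nf

theorem stmt13_general {Ω : Type*} [MeasurableSpace Ω] (μ : Measure Ω) [IsProbabilityMeasure μ]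
    (m : ℕ) (hm : 2 ≤ m)
    (X : ℕ → Ω → ℝ) (hXmeas : ∀ i, Measurable (X i))
    (hident : ∀ i, μ.map (X i) = μ.map (X 0))
    (h : (Fin m → ℝ) → ℝ)
    (hint : Integrable (fun ω => |h (fun j => X j ω)| ^ ((5 : ℝ) / 3)) μ)
    (g : ℕ → ℝ → ℝ) (hgmeas : ∀ n, Measurable (g n))
    (hgver : ∀ n : ℕ, (fun ω => g n (X 0 ω)) =ᵐ[μ]
      μ[(fun ω => if (n : ℝ) ^ ((3 * m : ℝ) / 5) < |h (fun j => X j ω)| then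
          h (fun j => X j ω) else 0) |
        MeasurableSpace.comap (X 0) inferInstance]) :
    ∀ ε > (0 : ℝ), Tendsto
      (fun n : ℕ => (μ {ω | ε ≤
        |((n : ℝ) - 2 * m + 2)⁻¹ *
          ∑ i ∈ range n \ Ico 1 (2 * m - 1), (g n (X i ω)) ^ 2|}).toReal)
      atTop (nhds 0) := by
  intro ε hε
  have hm' : (2 : ℝ) ≤ m := by exact_mod_cast hm
  refine tendsto_of_tendsto_of_tendsto_of_le_of_le' tendsto_const_nhds
    ((tendsto_sqrt_div_mul_rpow_rpow_atTop (a := 3 * m / 5) (p := 5 / 3) hε.le (by linarith)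
      (∫ ω, |h (fun j => X j ω)| ^ ((5 : ℝ) / 3) ∂μ)).comp tendsto_natCast_atTop_atTop)
    (Eventually.of_forall fun n => ENNReal.toReal_nonneg) ?_
  filter_upwards [eventually_ge_atTop (2 * m - 1)] with n hn
  set S := range n \ Ico 1 (2 * m - 1)
  have hcard : (#S : ℝ) = n - 2 * m + 2 := by
    rw [natCast_card_range_sdiff_Ico (by omega) hn, Nat.cast_sub (by omega)]
    push_cast
    ring
  have hn0 : (0 : ℝ) < n := by exact_mod_cast (show 0 < n by omega)
  rw [← hcard]
  refine (measureReal_abs_mean_sq_comp_ge_le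
    (fun i => ⟨(hXmeas i).aemeasurable, (hXmeas 0).aemeasurable, hident i⟩) (hgmeas n)
    (hgver n) ⟨0, mem_sdiff.mpr
      ⟨mem_range.mpr (by omega), fun h0 => Nat.not_succ_le_zero 0 (mem_Ico.mp h0).1⟩⟩ hε).trans ?_
  simp only [Function.comp_apply]
  gcongr
  · exact (card_le_card sdiff_subset).trans_eq (card_range n)
  · exact integral_abs_ite_lt_abs_le (by positivity) (by norm_num) hint

/-- Proposition 8(b), key step: with `h̃*(x) = E(h·1(|h| > n^{3m/5}) | X₁ = x)`,
`(1/(n−2m+2)) Σ_{i ∈ Iₙ} h̃*(Xᵢ)² = o_P(1)`, where `Iₙ = {1,…,n} \ {2,…,2m−1}`. -/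
theorem stmt13 {Ω : Type*} [MeasurableSpace Ω] (μ : Measure Ω) [IsProbabilityMeasure μ]
    (m : ℕ) (hm : 2 ≤ m)
    (X : ℕ → Ω → ℝ) (hXmeas : ∀ i, Measurable (X i))
    (hindep : iIndepFun X μ)
    (hident : ∀ i, μ.map (X i) = μ.map (X 0))
    (h : (Fin m → ℝ) → ℝ) (hmeas : Measurable h)
    (hint : Integrable (fun ω => |h (fun j => X j ω)| ^ ((5 : ℝ) / 3)) μ)
    (g : ℕ → ℝ → ℝ) (hgmeas : ∀ n, Measurable (g n))
    (hgver : ∀ n : ℕ, (fun ω => g n (X 0 ω)) =ᵐ[μ]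
      μ[(fun ω => if (n : ℝ) ^ ((3 * m : ℝ) / 5) < |h (fun j => X j ω)| then
          h (fun j => X j ω) else 0) |
        MeasurableSpace.comap (X 0) inferInstance]) :
    ∀ ε > (0 : ℝ), Tendsto
      (fun n : ℕ => (μ {ω | ε ≤
        |((n : ℝ) - 2 * m + 2)⁻¹ *
          ∑ i ∈ range n \ Ico 1 (2 * m - 1), (g n (X i ω)) ^ 2|}).toReal)
      atTop (nhds 0) :=
  stmt13_general μ m hm X hXmeas hident h hint g hgmeas hgver
end
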